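/- Let z = x + iy be a complex number with y ≠ 0 or x ≥ 1, let r₁ = |z−1|, r₂ = |z+1|, α = (r₁+r₂)/2, β = (r₂−r₁)/2, and let C(z) = arcosh(α) + i·sign(y)·arccos(β). Then cosh(C(z)) = z, where cosh is the complex hyperbolic cosine function. -/

import Mathlib

open Complex

/-- Real inverse hyperbolic cosine, `arcosh t = ln (t + √(t²-1))`. -/
noncomputable def arcosh (t : ℝ) : ℝ := Real.log (t + Real.sqrt (t ^ 2 - 1))

/-- `α(w) = (|w-1| + |w+1|)/2`. -/
noncomputable def alpha (w : ℂ) : ℝ := (‖w - 1‖ + ‖w + 1‖) / 2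

/-- `β(w) = (|w+1| - |w-1|)/2`. -/
noncomputable def beta (w : ℂ) : ℝ := (‖w + 1‖ - ‖w - 1‖) / 2

/-- Principal branch `C(w)` of the inverse hyperbolic cosine on the cut plane
`ℂ ∖ (-∞, 1)`. -/
noncomputable def C (w : ℂ) : ℂ :=
  (arcosh (alpha w) : ℝ) + Complex.I * (Real.sign w.im : ℝ) * (Real.arccos (beta w) : ℝ)

/-!
Writing `C z = a + θ i` with `a = arcosh α` and `θ = sign y · arccos β`, one has
`cosh (C z) = cosh a cos θ + i sinh a sin θ = α β + i sign y · √(α² - 1) √(1 - β²)`.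
From `r₁² = (x - 1)² + y²` and `r₂² = (x + 1)² + y²` one gets `α β = x` and
`(α² - 1)(1 - β²) = y²`, so this is `x + i sign y · |y| = z`. On the real axis `θ = 0`, and
the hypothesis `x ≥ 1` gives `r₁ = x - 1`, `r₂ = x + 1`, hence `α = x`.
-/

theorem arcosh_eq_real_arcosh : arcosh = Real.arcosh := rfl

theorem Real.sign_mul_abs (r : ℝ) : Real.sign r * |r| = r := by
  rcases lt_trichotomy r 0 with hr | rfl | hr
  · rw [Real.sign_of_neg hr, abs_of_neg hr]; ring
  · simp
  · rw [Real.sign_of_pos hr, abs_of_pos hr, one_mul]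

theorem Real.cos_sign_mul {r : ℝ} (hr : r ≠ 0) (t : ℝ) :
    Real.cos (Real.sign r * t) = Real.cos t := by
  rcases Real.sign_apply_eq_of_ne_zero r hr with hs | hs <;> simp [hs]

theorem Real.sin_sign_mul (r t : ℝ) :
    Real.sin (Real.sign r * t) = Real.sign r * Real.sin t := by
  rcases Real.sign_apply_eq r with hs | hs | hs <;> simp [hs]

theorem Complex.cosh_ofReal_add_ofReal_mul_I (a θ : ℝ) :
    cosh (a + θ * I) = (Real.cosh a * Real.cos θ : ℝ) + (Real.sinh a * Real.sin θ : ℝ) * I := by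
  rw [cosh_add, cosh_mul_I, sinh_mul_I, ← ofReal_cosh, ← ofReal_cos, ← ofReal_sinh,
    ← ofReal_sin]
  push_cast
  ring

section AlphaBeta

variable (w : ℂ)

theorem norm_sub_one_sq : ‖w - 1‖ ^ 2 = (w.re - 1) ^ 2 + w.im ^ 2 := by
  rw [Complex.sq_norm, normSq_apply, sub_re, sub_im, one_re, one_im, sub_zero]; ring

theorem norm_add_one_sq : ‖w + 1‖ ^ 2 = (w.re + 1) ^ 2 + w.im ^ 2 := by
  rw [Complex.sq_norm, normSq_apply, add_re, add_im, one_re, one_im, add_zero]; ring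

theorem one_le_alpha : 1 ≤ alpha w := by
  have h := norm_sub_le (w + 1) (w - 1)
  rw [add_sub_sub_cancel, one_add_one_eq_two, Complex.norm_two] at h
  rw [alpha]; linarith

theorem abs_beta_le_one : |beta w| ≤ 1 := by
  have h := abs_norm_sub_norm_le (w + 1) (w - 1)
  rw [add_sub_sub_cancel, one_add_one_eq_two, Complex.norm_two] at h
  rw [beta, abs_div, abs_two]; linarith

theorem alpha_mul_beta : alpha w * beta w = w.re := by
  rw [alpha, beta]
  linear_combination (norm_add_one_sq w - norm_sub_one_sq w) / 4

theorem alpha_sq_sub_one_mul_one_sub_beta_sq :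
    (alpha w ^ 2 - 1) * (1 - beta w ^ 2) = w.im ^ 2 := by
  have hsum : alpha w ^ 2 + beta w ^ 2 = w.re ^ 2 + w.im ^ 2 + 1 := by
    rw [alpha, beta]
    linear_combination (norm_sub_one_sq w + norm_add_one_sq w) / 2
  linear_combination hsum - (alpha w * beta w + w.re) * alpha_mul_beta w

theorem sqrt_alpha_sq_sub_one_mul_sqrt_one_sub_beta_sq :
    √(alpha w ^ 2 - 1) * √(1 - beta w ^ 2) = |w.im| := by
  have h1 : 0 ≤ alpha w ^ 2 - 1 := by nlinarith [one_le_alpha w]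
  rw [← Real.sqrt_mul h1, alpha_sq_sub_one_mul_one_sub_beta_sq, Real.sqrt_sq_eq_abs]

theorem C_eq :
    C w = Real.arcosh (alpha w) + (Real.sign w.im * Real.arccos (beta w) : ℝ) * I := by
  rw [C, arcosh_eq_real_arcosh]; push_cast; ring

theorem cosh_C : cosh (C w) = (alpha w * Real.cos (Real.sign w.im * Real.arccos (beta w)) : ℝ) +
    (√(alpha w ^ 2 - 1) * Real.sin (Real.sign w.im * Real.arccos (beta w)) : ℝ) * I := by
  rw [C_eq, cosh_ofReal_add_ofReal_mul_I, Real.cosh_arcosh (one_le_alpha w),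
    Real.sinh_arcosh (one_le_alpha w)]

end AlphaBeta

theorem alpha_of_im_eq_zero {w : ℂ} (him : w.im = 0) (hre : 1 ≤ w.re) : alpha w = w.re := by
  have hr₁ : ‖w - 1‖ = w.re - 1 := by
    rw [← Real.sqrt_sq (norm_nonneg _), norm_sub_one_sq, him, zero_pow two_ne_zero, add_zero,
      Real.sqrt_sq (by linarith)]
  have hr₂ : ‖w + 1‖ = w.re + 1 := by
    rw [← Real.sqrt_sq (norm_nonneg _), norm_add_one_sq, him, zero_pow two_ne_zero, add_zero,
      Real.sqrt_sq (by linarith)]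
  rw [alpha, hr₁, hr₂]; ring

theorem stmt15 (z : ℂ) (h : z.im ≠ 0 ∨ 1 ≤ z.re) : Complex.cosh (C z) = z := by
  rw [cosh_C]
  conv_rhs => rw [← re_add_im z]
  rcases eq_or_ne z.im 0 with him | him
  · rw [alpha_of_im_eq_zero him (h.resolve_left (not_not.2 him)), him]
    simp
  · obtain ⟨hβ₁, hβ₂⟩ := abs_le.1 (abs_beta_le_one z)
    rw [Real.cos_sign_mul him, Real.cos_arccos hβ₁ hβ₂, alpha_mul_beta, Real.sin_sign_mul,
      Real.sin_arccos, mul_left_comm, sqrt_alpha_sq_sub_one_mul_sqrt_one_sub_beta_sq,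
      Real.sign_mul_abs]
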